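/- arXiv:2402.14726 — 2 statements merged into one kernel-verified Lean document; each statement's English description precedes it below -/
import Mathlib

section
/- Let C^(0), …, C^(m) be nonempty finite sets, let K be a clause (a finite nonempty set of pairs (i, j) with 0 ≤ i ≤ m and j ∈ C^(i)), and for each i let q^(i) be a probability vector on C^(i) (q_j^(i) ≥ 0, ∑_{j ∈ C^(i)} q_j^(i) = 1). If ∑_{(i,j) ∈ K} q_j^(i) ≥ 1, then there exists a joint distribution π on C^× = C^(0) × … × C^(m) whose marginal on each coordinate i equals q^(i) (i.e., p_j^(i) = q_j^(i) for all i, j) and which assigns probability 1 to the clause event E_K = {c ∈ C^× : ∃(i,j) ∈ K, c^(i) = j}. -/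
open Finset

theorem trunc_aux {α : Type*} [DecidableEq α] (s : Finset α) (a : α → ℝ) :
    (∀ p ∈ s, 0 ≤ a p) → ∀ t : ℝ, 0 ≤ t → t ≤ ∑ p ∈ s, a p →
    ∃ r : α → ℝ, (∀ p, 0 ≤ r p) ∧ (∀ p ∈ s, r p ≤ a p) ∧ ∑ p ∈ s, r p = t := by
  classical
  induction s using Finset.induction_on with
  | empty =>
    intro _ t ht0 ht
    simp only [Finset.sum_empty] at ht
    exact ⟨fun _ => 0, fun _ => le_refl 0, fun p hp => absurd hp (Finset.notMem_empty p),
      by simp [le_antisymm ht ht0]⟩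
  | insert _ _ hx ih =>
    rename_i x s
    intro h0 t ht0 ht
    rw [Finset.sum_insert hx] at ht
    have hax : 0 ≤ a x := h0 x (Finset.mem_insert_self x s)
    have h0' : ∀ p ∈ s, 0 ≤ a p := fun p hp => h0 p (Finset.mem_insert_of_mem hp)
    set u := min (a x) t with hu
    have hu0 : 0 ≤ u := le_min hax ht0
    have hut : u ≤ t := min_le_right _ _
    have hua : u ≤ a x := min_le_left _ _
    have h1 : t - u ≤ ∑ p ∈ s, a p := by
      rcases min_cases (a x) t with ⟨h, _⟩ | ⟨h, _⟩
      · rw [hu, h]; linarith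
      · rw [hu, h]; simp [Finset.sum_nonneg h0']
    obtain ⟨r', hr'0, hr'le, hr's⟩ := ih h0' (t - u) (by linarith) h1
    refine ⟨Function.update r' x u, ?_, ?_, ?_⟩
    · intro p
      rcases eq_or_ne p x with rfl | hpx
      · simp [hu0]
      · simp [Function.update_of_ne hpx, hr'0]
    · intro p hp
      rcases Finset.mem_insert.mp hp with rfl | hps
      · simp [hua]
      · have : p ≠ x := fun h => hx (h ▸ hps)
        simp [Function.update_of_ne this, hr'le p hps]
    · rw [Finset.sum_insert hx, Function.update_self]
      have : ∑ p ∈ s, Function.update r' x u p = ∑ p ∈ s, r' p := by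
        apply Finset.sum_congr rfl
        intro p hps
        exact Function.update_of_ne (fun h => hx (h ▸ hps) : p ≠ x) _ _
      rw [this, hr's]; ring
/-- Tightness of the per-clause bound: if probability vectors `q i` on the concept
outcome sets `C i` satisfy `∑_{(i,j) ∈ K} q i j ≥ 1` for a clause `K`, then there is
a joint distribution `π` on the product whose marginals are exactly the `q i` and
which assigns probability one to the clause event `E_K`. -/
theorem exists_joint_of_clause_sum_ge_one {m : ℕ} (C : Fin (m + 1) → Type*)
    [∀ i, Fintype (C i)] [∀ i, Nonempty (C i)] [∀ i, DecidableEq (C i)]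
    (K : Finset (Σ i, C i)) (hK : K.Nonempty)
    (q : ∀ i, C i → ℝ) (hq0 : ∀ i j, 0 ≤ q i j) (hq1 : ∀ i, ∑ j, q i j = 1)
    (hsum : 1 ≤ ∑ p ∈ K, q p.1 p.2) :
    ∃ π : (∀ i, C i) → ℝ,
      (∀ c, 0 ≤ π c) ∧ (∑ c, π c = 1) ∧
      (∀ i j, ∑ c, π c * (if c i = j then (1 : ℝ) else 0) = q i j) ∧
      (∑ c ∈ Finset.univ.filter (fun c : ∀ i, C i => ∃ p ∈ K, c p.1 = p.2), π c = 1) := by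
  classical
  obtain ⟨r, hr0, hrle, hr1⟩ := trunc_aux K (fun p => q p.1 p.2)
    (fun p _ => hq0 p.1 p.2) 1 zero_le_one hsum
  -- the mass of clause literals at (i,j)
  set sK : ∀ i, C i → ℝ := fun i j => if (⟨i, j⟩ : Σ i, C i) ∈ K then r ⟨i, j⟩ else 0 with hsK
  set R : Fin (m + 1) → ℝ := fun i => ∑ j, sK i j with hRdef
  set ν : ∀ i, C i → ℝ := fun i j => (q i j - sK i j) / (1 - R i) with hν
  set μ : (Σ i, C i) → ∀ i, C i → ℝ := fun p i x =>
    if i = p.1 then (if (⟨i, x⟩ : Σ i, C i) = p then 1 else 0) else ν i x with hμ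
  set π : (∀ i, C i) → ℝ := fun c => ∑ p ∈ K, r p * ∏ i, μ p i (c i) with hπ
  have h_sK0 : ∀ i j, 0 ≤ sK i j := by
    intro i j; rw [hsK]; dsimp only; split
    · exact hr0 _
    · exact le_refl 0
  have h_sK_le : ∀ i j, sK i j ≤ q i j := by
    intro i j; rw [hsK]; dsimp only; split
    · exact hrle _ ‹_›
    · exact hq0 i j
  have hT : ∀ i, (univ.filter fun j => (⟨i, j⟩ : Σ i, C i) ∈ K).image
      (fun j => (⟨i, j⟩ : Σ i, C i)) = K.filter (fun p => p.1 = i) := by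
    intro i
    ext p
    simp only [mem_image, mem_filter, mem_univ, true_and]
    constructor
    · rintro ⟨j, hj, rfl⟩; exact ⟨hj, rfl⟩
    · rintro ⟨hpK, hpi⟩
      obtain ⟨p1, p2⟩ := p
      dsimp at hpi; subst hpi
      exact ⟨p2, hpK, rfl⟩
  have hR : ∀ i, R i = ∑ p ∈ K.filter (fun p => p.1 = i), r p := by
    intro i
    rw [hRdef]; dsimp only
    rw [← hT i, Finset.sum_image (by intro a _ b _ h; exact sigma_mk_injective h)]
    rw [hsK]; dsimp only
    exact (Finset.sum_filter _ _).symm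
  have hRle : ∀ i, R i ≤ 1 := by
    intro i
    rw [hR i, ← hr1]
    exact Finset.sum_le_sum_of_subset_of_nonneg (Finset.filter_subset _ _)
      (fun p _ _ => hr0 p)
  have hRne : ∀ p ∈ K, r p ≠ 0 → ∀ i, i ≠ p.1 → R i ≠ 1 := by
    intro p hp hrp i hi
    have hpnot : p ∉ K.filter (fun p' => p'.1 = i) := by
      simp only [mem_filter]
      rintro ⟨-, h⟩; exact hi h.symm
    have h2 : ∑ p' ∈ insert p (K.filter (fun p' => p'.1 = i)), r p' ≤ 1 := by
      rw [← hr1]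
      exact Finset.sum_le_sum_of_subset_of_nonneg
        (Finset.insert_subset hp (Finset.filter_subset _ _)) (fun p _ _ => hr0 p)
    rw [Finset.sum_insert hpnot] at h2
    have hrp' : 0 < r p := lt_of_le_of_ne (hr0 p) (Ne.symm hrp)
    intro hR1; rw [hR i] at hR1; linarith
  have hν0 : ∀ i j, 0 ≤ ν i j := fun i j =>
    div_nonneg (by linarith [h_sK_le i j]) (by linarith [hRle i])
  have hνsum : ∀ i, R i ≠ 1 → ∑ j, ν i j = 1 := by
    intro i hi
    rw [hν]; dsimp only
    rw [← Finset.sum_div, Finset.sum_sub_distrib, hq1 i]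
    have hRi : ∑ x : C i, sK i x = R i := rfl
    rw [hRi]
    exact div_self (sub_ne_zero.mpr (Ne.symm hi))
  have hδsum : ∀ p : Σ i, C i,
      ∑ x : C p.1, (if (⟨p.1, x⟩ : Σ i, C i) = p then (1 : ℝ) else 0) = 1 := by
    intro p
    obtain ⟨p1, p2⟩ := p
    simp
  have hμ0 : ∀ p i x, 0 ≤ μ p i x := by
    intro p i x; rw [hμ]; dsimp only
    split
    · split <;> norm_num
    · exact hν0 i x
  have hμsum : ∀ p ∈ K, r p ≠ 0 → ∀ i, ∑ x, μ p i x = 1 := by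
    intro p hp hrp i
    rw [hμ]; dsimp only
    rcases eq_or_ne i p.1 with rfl | hi
    · simp only [if_pos rfl]; exact hδsum p
    · simp only [if_neg hi]; exact hνsum i (hRne p hp hrp i hi)
  have hfub : ∀ (f : ∀ i, C i → ℝ),
      ∑ c : (∀ i, C i), ∏ i, f i (c i) = ∏ i, ∑ x, f i x := by
    intro f
    rw [Finset.prod_univ_sum, Fintype.piFinset_univ]
  have htotal : ∑ c, π c = 1 := by
    rw [hπ]; dsimp only
    rw [Finset.sum_comm]
    have hper : ∀ p ∈ K, ∑ c : (∀ i, C i), r p * ∏ i, μ p i (c i) = r p := by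
      intro p hp
      rw [← Finset.mul_sum, hfub (μ p)]
      rcases eq_or_ne (r p) 0 with h | h
      · simp [h]
      · rw [Finset.prod_eq_one (fun i _ => hμsum p hp h i), mul_one]
    rw [Finset.sum_congr rfl hper, hr1]
  refine ⟨π, ?_, htotal, ?_, ?_⟩
  · intro c
    exact Finset.sum_nonneg fun p _ => mul_nonneg (hr0 p)
      (Finset.prod_nonneg fun i _ => hμ0 p i (c i))
  · -- marginals
    intro i₀ j
    set φ : ∀ i, C i → ℝ := fun i x =>
      if i = i₀ then (if (⟨i, x⟩ : Σ i, C i) = ⟨i₀, j⟩ then 1 else 0) else 1 with hφ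
    have hind : ∀ c : ∀ i, C i, (if c i₀ = j then (1 : ℝ) else 0) = ∏ i, φ i (c i) := by
      intro c
      rw [Finset.prod_eq_single i₀ (fun i _ hi => by rw [hφ]; dsimp only; rw [if_neg hi])
        (fun h => absurd (Finset.mem_univ i₀) h)]
      rw [hφ]; dsimp only
      rw [if_pos rfl]
      simp
    have hsplit : ∀ c : ∀ i, C i, π c * (if c i₀ = j then (1 : ℝ) else 0) =
        ∑ p ∈ K, r p * ∏ i, (μ p i (c i) * φ i (c i)) := by
      intro c
      rw [hind c, hπ]; dsimp only
      rw [Finset.sum_mul]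
      exact Finset.sum_congr rfl fun p _ => by
        rw [mul_assoc, ← Finset.prod_mul_distrib]
    rw [Finset.sum_congr rfl (fun c _ => hsplit c), Finset.sum_comm]
    have hfactor : ∀ p, μ p i₀ j =
        (if p.1 = i₀ then (if p = ⟨i₀, j⟩ then (1 : ℝ) else 0) else ν i₀ j) := by
      intro p
      rw [hμ]; dsimp only
      rcases eq_or_ne i₀ p.1 with h1 | h1
      · rw [if_pos h1, if_pos h1.symm]
        simp [eq_comm]
      · rw [if_neg h1, if_neg (Ne.symm h1)]
    have hper : ∀ p ∈ K, ∑ c : (∀ i, C i), r p * ∏ i, (μ p i (c i) * φ i (c i)) =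
        r p * (if p.1 = i₀ then (if p = ⟨i₀, j⟩ then (1 : ℝ) else 0) else ν i₀ j) := by
      intro p hp
      rw [← Finset.mul_sum, hfub (fun i x => μ p i x * φ i x)]
      rcases eq_or_ne (r p) 0 with h | h
      · simp [h]
      · congr 1
        rw [Finset.prod_eq_single i₀ ?side (fun hh => absurd (Finset.mem_univ i₀) hh)]
        case side =>
          intro i _ hi
          have : ∀ x, φ i x = 1 := fun x => by rw [hφ]; dsimp only; rw [if_neg hi]
          simp only [this, mul_one]
          exact hμsum p hp h i
        -- main factor at i₀
        have hφ0 : ∀ x : C i₀, φ i₀ x = (if x = j then (1 : ℝ) else 0) := by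
          intro x
          rw [hφ]; dsimp only
          rw [if_pos rfl]
          simp
        simp only [hφ0, mul_ite, mul_one, mul_zero]
        rw [Finset.sum_ite_eq' Finset.univ j (fun x => μ p i₀ x)]
        rw [if_pos (Finset.mem_univ j)]
        exact hfactor p
    rw [Finset.sum_congr rfl hper]
    have hsplit2 : ∀ p ∈ K,
        r p * (if p.1 = i₀ then (if p = ⟨i₀, j⟩ then (1 : ℝ) else 0) else ν i₀ j) =
        (if p = ⟨i₀, j⟩ then r p else 0) + (if p.1 = i₀ then 0 else r p * ν i₀ j) := by
      intro p _
      rcases eq_or_ne p ⟨i₀, j⟩ with rfl | hpj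
      · simp
      · rcases eq_or_ne p.1 i₀ with h1 | h1 <;> simp [h1, hpj]
    rw [Finset.sum_congr rfl hsplit2, Finset.sum_add_distrib]
    have h1 : ∑ p ∈ K, (if p = ⟨i₀, j⟩ then r p else 0) = sK i₀ j := by
      rw [Finset.sum_ite_eq' K ⟨i₀, j⟩ r]
    have h2 : ∑ p ∈ K, (if p.1 = i₀ then (0 : ℝ) else r p * ν i₀ j) =
        (1 - R i₀) * ν i₀ j := by
      rw [Finset.sum_ite]
      simp only [Finset.sum_const_zero, zero_add]
      rw [← Finset.sum_mul]
      congr 1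
      have hadd := Finset.sum_filter_add_sum_filter_not K (fun p => p.1 = i₀) r
      rw [hr1] at hadd
      rw [hR i₀] at *
      linarith
    rw [h1, h2]
    rcases eq_or_ne (R i₀) 1 with hR1 | hR1
    · have hqeq : sK i₀ j = q i₀ j := by
        have hsum' : ∑ x : C i₀, sK i₀ x = ∑ x : C i₀, q i₀ x := by
          rw [hq1 i₀]; exact hR1
        exact (Finset.sum_eq_sum_iff_of_le (fun x _ => h_sK_le i₀ x)).mp hsum' j
          (Finset.mem_univ j)
      rw [hR1, hqeq]; ring
    · have hcancel : (1 - R i₀) * ν i₀ j = q i₀ j - sK i₀ j := by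
        rw [hν]; dsimp only
        rw [mul_comm, div_mul_cancel₀ _ (sub_ne_zero.mpr (Ne.symm hR1))]
      rw [hcancel]; ring
  · -- clause event
    rw [← htotal]
    apply Finset.sum_subset (Finset.filter_subset _ _)
    intro c _ hc
    simp only [Finset.mem_filter, Finset.mem_univ, true_and] at hc
    push_neg at hc
    rw [hπ]; dsimp only
    apply Finset.sum_eq_zero
    intro p hp
    obtain ⟨p1, p2⟩ := p
    have hz : μ ⟨p1, p2⟩ p1 (c p1) = 0 := by
      rw [hμ]; dsimp only
      rw [if_pos rfl, if_neg]
      intro h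
      exact hc ⟨p1, p2⟩ hp (sigma_mk_injective h)
    rw [Finset.prod_eq_zero (Finset.mem_univ p1) hz, mul_zero]
end

section
/- Let C^(0), …, C^(m) be nonempty finite sets and K a clause (a finite nonempty set of pairs (i, j) with 0 ≤ i ≤ m and j ∈ C^(i)). A tuple (q^(0), …, q^(m)) of probability vectors (q^(i) on C^(i)) arises as the tuple of marginal vectors of some joint distribution π on C^× that assigns probability 1 to the clause event E_K if and only if ∑_{(i,j) ∈ K} q_j^(i) ≥ 1. -/
open Finset in
private lemma exists_clause_pi {m : ℕ} (C : Fin (m + 1) → Type*)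
    [∀ i, Fintype (C i)] [∀ i, Nonempty (C i)] [∀ i, DecidableEq (C i)]
    (K : Finset (Σ i, C i))
    (q : ∀ i, C i → ℝ) (hq0 : ∀ i j, 0 ≤ q i j) (hq1 : ∀ i, ∑ j, q i j = 1)
    (hsum : 1 ≤ ∑ p ∈ K, q p.1 p.2) :
    ∃ π : (∀ i, C i) → ℝ,
      (∀ c, 0 ≤ π c) ∧ (∑ c, π c = 1) ∧
      (∀ i j, ∑ c, π c * (if c i = j then (1 : ℝ) else 0) = q i j) ∧
      (∀ c, (∀ p ∈ K, c p.1 ≠ p.2) → π c = 0) := by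
  classical
  set n := K.card with hn
  set ef : {x // x ∈ K} ≃ Fin n := K.equivFin with hef
  set p : Fin n → (Σ i, C i) := fun l => (ef.symm l).1 with hp
  set qp : (Σ i, C i) → ℝ := fun s => q s.1 s.2 with hqp
  set Q : ℕ → ℝ := fun t => ∑ r ∈ Finset.range t, (if h : r < n then qp (p ⟨r, h⟩) else 0)
    with hQ
  set F : ℕ → ℝ := fun t => min (Q t) 1 with hF
  set a : Fin n → ℝ := fun l => F ((l : ℕ) + 1) - F (l : ℕ) with ha
  have hqp0 : ∀ s, 0 ≤ qp s := fun s => hq0 s.1 s.2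
  have hQstep : ∀ t : ℕ, Q (t + 1) = Q t + (if h : t < n then qp (p ⟨t, h⟩) else 0) := by
    intro t; simp [hQ, Finset.sum_range_succ]
  have hQstep' : ∀ l : Fin n, Q ((l : ℕ) + 1) = Q (l : ℕ) + qp (p l) := by
    intro l
    rw [hQstep]
    simp [l.isLt]
  have hFmono : ∀ t : ℕ, F t ≤ F (t + 1) := by
    intro t
    have : Q t ≤ Q (t + 1) := by
      rw [hQstep]
      have : (0:ℝ) ≤ (if h : t < n then qp (p ⟨t, h⟩) else 0) := by
        split
        · exact hqp0 _
        · exact le_rfl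
      linarith
    exact min_le_min this le_rfl
  have ha_nonneg : ∀ l, 0 ≤ a l := by
    intro l; simp only [ha]; have := hFmono (l : ℕ); linarith
  have ha_le : ∀ l, a l ≤ qp (p l) := by
    intro l
    simp only [ha, hF]
    rw [hQstep' l]
    have h1 : min (Q (l : ℕ) + qp (p l)) 1 ≤ min (Q (l : ℕ) + qp (p l)) (1 + qp (p l)) :=
      min_le_min le_rfl (by have := hqp0 (p l); linarith)
    have h2 : min (Q (l : ℕ) + qp (p l)) (1 + qp (p l)) = min (Q (l : ℕ)) 1 + qp (p l) :=
      min_add_add_right _ _ _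
    linarith
  have hQn : Q n = ∑ s ∈ K, qp s := by
    have h1 : Q n = ∑ l : Fin n, qp (p l) := by
      simp only [hQ]
      rw [← Fin.sum_univ_eq_sum_range (fun r => if h : r < n then qp (p ⟨r, h⟩) else 0) n]
      refine Finset.sum_congr rfl fun l _ => ?_
      simp [l.isLt]
    have h2 : ∑ l : Fin n, qp (p l) = ∑ s : {x // x ∈ K}, qp s.1 :=
      Equiv.sum_comp ef.symm (fun s : {x // x ∈ K} => qp s.1)
    rw [h1, h2, Finset.sum_coe_sort K qp]
  have hsum_a : ∑ l : Fin n, a l = 1 := by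
    have h1 : ∑ l : Fin n, a l = ∑ t ∈ Finset.range n, (F (t + 1) - F t) := by
      rw [← Fin.sum_univ_eq_sum_range (fun t => F (t + 1) - F t)]
    rw [h1, Finset.sum_range_sub F n]
    have hF0 : F 0 = 0 := by simp [hF, hQ]
    have hFn : F n = 1 := by
      simp only [hF]
      rw [hQn]
      exact min_eq_right (le_trans hsum (le_of_eq rfl))
    rw [hF0, hFn]; ring
  set a' : (Σ i, C i) → ℝ := fun s => if h : s ∈ K then a (ef ⟨s, h⟩) else 0 with ha'
  have ha'p : ∀ l : Fin n, a' (p l) = a l := by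
    intro l
    simp only [ha', hp]
    rw [dif_pos (ef.symm l).2]
    congr 1
    simp
  have ha'_nonneg : ∀ s, 0 ≤ a' s := by
    intro s; simp only [ha']; split
    · exact ha_nonneg _
    · exact le_rfl
  have ha'_le : ∀ s, a' s ≤ qp s := by
    intro s
    simp only [ha']
    split
    · rename_i h
      have := ha_le (ef ⟨s, h⟩)
      have hps : p (ef ⟨s, h⟩) = s := by simp [hp]
      rwa [hps] at this
    · exact hqp0 s
  have hsum_a' : ∑ s : (Σ i, C i), a' s = 1 := by
    rw [← Finset.sum_subset (Finset.subset_univ K) (by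
      intro s _ hs; simp [ha', hs])]
    rw [← Finset.sum_coe_sort K a']
    rw [← Equiv.sum_comp ef.symm (fun s : {x // x ∈ K} => a' s.1)]
    calc ∑ l : Fin n, a' (ef.symm l).1 = ∑ l : Fin n, a l := by
          refine Finset.sum_congr rfl fun l _ => ?_
          exact ha'p l
      _ = 1 := hsum_a
  set A : Fin (m + 1) → ℝ := fun i => ∑ j, a' ⟨i, j⟩ with hA
  have hA_nonneg : ∀ i, 0 ≤ A i := fun i => Finset.sum_nonneg fun j _ => ha'_nonneg _
  have hA_sum : ∑ i, A i = 1 := by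
    rw [← hsum_a', ← Finset.univ_sigma_univ, Finset.sum_sigma]
  have hA_le1 : ∀ i, A i ≤ 1 := by
    intro i
    calc A i ≤ ∑ i', A i' :=
          Finset.single_le_sum (fun i' _ => hA_nonneg i') (Finset.mem_univ i)
      _ = 1 := hA_sum
  have hrA : ∀ i, ∑ j, (q i j - a' ⟨i, j⟩) = 1 - A i := by
    intro i
    rw [Finset.sum_sub_distrib, hq1 i, hA]
  set ν : ∀ i, C i → ℝ := fun i j =>
    if 1 - A i = 0 then (Fintype.card (C i) : ℝ)⁻¹ else (q i j - a' ⟨i, j⟩) / (1 - A i)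
    with hν
  have hν0 : ∀ i j, 0 ≤ ν i j := by
    intro i j
    simp only [hν]
    split
    · positivity
    · rename_i h
      have h1 : 0 < 1 - A i := lt_of_le_of_ne (by have := hA_le1 i; linarith) (Ne.symm h)
      have h2 : 0 ≤ q i j - a' ⟨i, j⟩ := sub_nonneg.2 (ha'_le ⟨i, j⟩)
      positivity
  have hν1 : ∀ i, ∑ j, ν i j = 1 := by
    intro i
    simp only [hν]
    split
    · rw [Finset.sum_const, nsmul_eq_mul]
      rw [Finset.card_univ, mul_inv_cancel₀]
      exact_mod_cast Fintype.card_ne_zero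
    · rename_i h
      rw [← Finset.sum_div, hrA i, div_self h]
  set g : Fin n → ∀ i, C i → ℝ := fun l i x =>
    if (⟨i, x⟩ : Σ i, C i) = p l then 1 else if i = (p l).1 then 0 else ν i x with hg
  have hg0 : ∀ l i x, 0 ≤ g l i x := by
    intro l i x
    simp only [hg]
    split
    · norm_num
    · split
      · exact le_rfl
      · exact hν0 i x
  have hg_sum : ∀ l i, ∑ x, g l i x = 1 := by
    intro l i
    by_cases hi : i = (p l).1
    · obtain ⟨i0, j0, hpl⟩ : ∃ i0 j0, p l = ⟨i0, j0⟩ := ⟨(p l).1, (p l).2, rfl⟩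
      have hi2 : i = i0 := by rw [hpl] at hi; exact hi
      subst hi2
      have hsig : ∀ x : C i, ((⟨i, x⟩ : Σ i', C i') = ⟨i, j0⟩) ↔ x = j0 := by
        intro x
        constructor
        · intro h; exact eq_of_heq (Sigma.ext_iff.1 h).2
        · rintro rfl; rfl
      calc ∑ x, g l i x = ∑ x, (if x = j0 then (1:ℝ) else 0) := by
            refine Finset.sum_congr rfl fun x _ => ?_
            simp only [hg, hpl]
            by_cases hx : x = j0
            · rw [if_pos ((hsig x).2 hx), if_pos hx]
            · rw [if_neg (fun h => hx ((hsig x).1 h)), if_neg hx]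
              simp
        _ = 1 := by simp
    · calc ∑ x, g l i x = ∑ x, ν i x := by
            refine Finset.sum_congr rfl fun x _ => ?_
            simp only [hg]
            rw [if_neg, if_neg hi]
            intro h
            exact hi (congrArg Sigma.fst h)
        _ = 1 := hν1 i
  refine ⟨fun c => ∑ l, a l * ∏ i, g l i (c i), ?_, ?_, ?_, ?_⟩
  · intro c
    exact Finset.sum_nonneg fun l _ =>
      mul_nonneg (ha_nonneg l) (Finset.prod_nonneg fun i _ => hg0 l i (c i))
  · rw [Finset.sum_comm]
    calc ∑ l : Fin n, ∑ c : (∀ i, C i), a l * ∏ i, g l i (c i)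
        = ∑ l : Fin n, a l := by
          refine Finset.sum_congr rfl fun l _ => ?_
          rw [← Finset.mul_sum]
          have : ∑ c : (∀ i, C i), ∏ i, g l i (c i) = ∏ i, ∑ x, g l i x := by
            rw [Finset.prod_univ_sum (fun _ => Finset.univ) (fun i x => g l i x),
              Fintype.piFinset_univ]
          rw [this]
          simp [hg_sum]
      _ = 1 := hsum_a
  · intro i j
    have hsig : ∀ x : C i, ((⟨i, x⟩ : Σ i, C i) = ⟨i, j⟩) ↔ x = j := by
      intro x
      constructor
      · intro h; exact eq_of_heq (Sigma.ext_iff.1 h).2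
      · rintro rfl; rfl
    have key : ∀ c : (∀ i, C i),
        (∑ l, a l * ∏ i', g l i' (c i')) * (if c i = j then (1 : ℝ) else 0)
        = ∑ l, a l * ∏ i', (g l i' (c i') *
            (if i' = i then (if (⟨i', c i'⟩ : Σ i, C i) = ⟨i, j⟩ then (1:ℝ) else 0) else 1)) := by
      intro c
      rw [Finset.sum_mul]
      refine Finset.sum_congr rfl fun l _ => ?_
      rw [Finset.prod_mul_distrib, mul_assoc]
      congr 1
      congr 1
      rw [Finset.prod_ite_eq' Finset.univ i
        (fun i' => if (⟨i', c i'⟩ : Σ i, C i) = ⟨i, j⟩ then (1:ℝ) else 0)]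
      simp [hsig]
    calc ∑ c : (∀ i', C i'), (∑ l, a l * ∏ i', g l i' (c i')) * (if c i = j then (1:ℝ) else 0)
        = ∑ c : (∀ i', C i'), ∑ l, a l * ∏ i', (g l i' (c i') *
            (if i' = i then (if (⟨i', c i'⟩ : Σ i, C i) = ⟨i, j⟩ then (1:ℝ) else 0) else 1)) :=
          Finset.sum_congr rfl fun c _ => key c
      _ = ∑ l, a l * g l i j := by
          rw [Finset.sum_comm]
          refine Finset.sum_congr rfl fun l _ => ?_
          rw [← Finset.mul_sum]
          congr 1
          have hfac : ∑ c : (∀ i', C i'), ∏ i', (g l i' (c i') *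
              (if i' = i then (if (⟨i', c i'⟩ : Σ i, C i) = ⟨i, j⟩ then (1:ℝ) else 0) else 1))
              = ∏ i', ∑ x, (g l i' x *
              (if i' = i then (if (⟨i', x⟩ : Σ i, C i) = ⟨i, j⟩ then (1:ℝ) else 0) else 1)) := by
            rw [Finset.prod_univ_sum (fun _ => Finset.univ), Fintype.piFinset_univ]
          rw [hfac]
          rw [Fintype.prod_eq_single i]
          · simp only [eq_self_iff_true, if_true, hsig]
            calc ∑ x, g l i x * (if x = j then (1:ℝ) else 0)
                = ∑ x, (if x = j then g l i x else 0) := by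
                  refine Finset.sum_congr rfl fun x _ => ?_
                  split <;> ring
              _ = g l i j := by rw [Finset.sum_ite_eq' Finset.univ j (g l i)]; simp
          · intro i' hi'
            simp only [if_neg hi', mul_one]
            exact hg_sum l i'
      _ = q i j := by
          have hg_eq : ∀ l : Fin n, a l * g l i j =
              (if i = (p l).1 then (if (⟨i, j⟩ : Σ i, C i) = p l then a l else 0)
                else a l * ν i j) := by
            intro l
            simp only [hg]
            by_cases h1 : (⟨i, j⟩ : Σ i, C i) = p l
            · rw [if_pos h1, if_pos h1, if_pos (congrArg Sigma.fst h1), mul_one]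
            · rw [if_neg h1]
              by_cases h2 : i = (p l).1
              · rw [if_pos h2, if_pos h2, if_neg h1, mul_zero]
              · rw [if_neg h2, if_neg h2]
          rw [Finset.sum_congr rfl fun l _ => hg_eq l]
          rw [Finset.sum_ite]
          have hpart1 : ∑ l ∈ Finset.univ.filter (fun l => i = (p l).1),
              (if (⟨i, j⟩ : Σ i, C i) = p l then a l else 0) = a' ⟨i, j⟩ := by
            rw [Finset.sum_filter]
            have hrw : ∀ l : Fin n,
                (if i = (p l).1 then (if (⟨i, j⟩ : Σ i, C i) = p l then a l else 0) else 0)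
                = (if (⟨i, j⟩ : Σ i, C i) = p l then a l else 0) := by
              intro l
              by_cases h1 : (⟨i, j⟩ : Σ i, C i) = p l
              · rw [if_pos (congrArg Sigma.fst h1)]
              · simp [h1]
            rw [Finset.sum_congr rfl fun l _ => hrw l]
            have htr := Equiv.sum_comp ef.symm
              (fun s : {x // x ∈ K} => if (⟨i, j⟩ : Σ i, C i) = s.1 then a (ef s) else 0)
            simp only [Equiv.apply_symm_apply] at htr
            simp only [hp]
            rw [htr]
            rw [Finset.univ_eq_attach]
            by_cases hK' : (⟨i, j⟩ : Σ i, C i) ∈ K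
            · rw [Finset.sum_eq_single (⟨(⟨i, j⟩ : Σ i, C i), hK'⟩ : {x // x ∈ K})]
              · rw [if_pos rfl]
                simp [ha', hK']
              · intro s _ hs
                rw [if_neg]
                intro h
                exact hs (Subtype.ext h.symm)
              · intro h
                exact absurd (Finset.mem_attach _ _) h
            · have hz : ∑ s ∈ K.attach,
                  (if (⟨i, j⟩ : Σ i, C i) = s.1 then a (ef s) else 0) = 0 :=
                Finset.sum_eq_zero fun s _ => by
                  rw [if_neg]
                  intro h
                  exact hK' (by rw [h]; exact s.2)
              rw [hz]
              simp [ha', hK']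
          have hAi : ∑ l ∈ Finset.univ.filter (fun l => i = (p l).1), a l = A i := by
            rw [Finset.sum_filter]
            have htr := Equiv.sum_comp ef.symm
              (fun s : {x // x ∈ K} => if i = s.1.1 then a (ef s) else 0)
            simp only [Equiv.apply_symm_apply] at htr
            simp only [hp]
            rw [htr, Finset.univ_eq_attach]
            have h1 : ∑ s ∈ K.attach, (if i = s.1.1 then a (ef s) else 0)
                = ∑ s ∈ K, (if i = s.1 then a' s else 0) := by
              rw [← Finset.sum_attach K (fun s => if i = s.1 then a' s else 0)]
              refine Finset.sum_congr rfl fun s _ => ?_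
              by_cases h : i = s.1.1
              · rw [if_pos h, if_pos h]
                simp [ha', s.2]
              · rw [if_neg h, if_neg h]
            rw [h1]
            have h2 : ∑ s ∈ K, (if i = s.1 then a' s else 0)
                = ∑ s : (Σ i, C i), (if i = s.1 then a' s else 0) := by
              refine Finset.sum_subset (Finset.subset_univ K) ?_
              intro s _ hs
              simp [ha', hs]
            rw [h2, ← Finset.univ_sigma_univ, Finset.sum_sigma]
            rw [Fintype.sum_eq_single i]
            · simp [hA]
            · intro i' hi'
              refine Finset.sum_eq_zero fun j' _ => ?_
              rw [if_neg]
              exact fun h => hi' h.symm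
          have hAic : ∑ l ∈ Finset.univ.filter (fun l => ¬ i = (p l).1), a l = 1 - A i := by
            have := Finset.sum_filter_add_sum_filter_not Finset.univ
              (fun l => i = (p l).1) a
            rw [hsum_a] at this
            rw [hAi] at this
            linarith
          rw [hpart1, ← Finset.sum_mul, hAic]
          by_cases h : 1 - A i = 0
          · rw [h, zero_mul, add_zero]
            have hz := (Finset.sum_eq_zero_iff_of_nonneg
              (fun j' (_ : j' ∈ Finset.univ) => sub_nonneg.2 (ha'_le ⟨i, j'⟩))).1
              (by rw [hrA i, h])
            have := hz j (Finset.mem_univ j)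
            linarith
          · have hν' : ν i j = (q i j - a' ⟨i, j⟩) / (1 - A i) := by
              simp only [hν]; rw [if_neg h]
            rw [hν', mul_div_cancel₀ _ h]
            ring
  · intro c hc
    refine Finset.sum_eq_zero fun l _ => ?_
    have hm : p l ∈ K := (ef.symm l).2
    have hzero : g l (p l).1 (c (p l).1) = 0 := by
      have hne : ((⟨(p l).1, c (p l).1⟩ : Σ i, C i)) ≠ p l := by
        intro h
        have h2 : c (p l).1 = (p l).2 := by
          have := (Sigma.ext_iff.1 h).2
          exact eq_of_heq this
        exact hc (p l) hm h2
      simp only [hg]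
      rw [if_neg hne]
      simp
    rw [Finset.prod_eq_zero (Finset.mem_univ (p l).1) hzero, mul_zero]

/-- Exact characterization of the feasible marginals for a single clause: a tuple of
probability vectors `q i` arises as the marginals of some joint distribution `π`
assigning probability one to the clause event `E_K` if and only if
`∑_{(i,j) ∈ K} q i j ≥ 1`. -/
theorem marginals_feasible_iff_clause_sum_ge_one {m : ℕ} (C : Fin (m + 1) → Type*)
    [∀ i, Fintype (C i)] [∀ i, Nonempty (C i)] [∀ i, DecidableEq (C i)]
    (K : Finset (Σ i, C i)) (hK : K.Nonempty)
    (q : ∀ i, C i → ℝ) (hq0 : ∀ i j, 0 ≤ q i j) (hq1 : ∀ i, ∑ j, q i j = 1) :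
    (∃ π : (∀ i, C i) → ℝ,
      (∀ c, 0 ≤ π c) ∧ (∑ c, π c = 1) ∧
      (∀ i j, ∑ c, π c * (if c i = j then (1 : ℝ) else 0) = q i j) ∧
      (∑ c ∈ Finset.univ.filter (fun c : ∀ i, C i => ∃ p ∈ K, c p.1 = p.2), π c = 1))
    ↔ 1 ≤ ∑ p ∈ K, q p.1 p.2 := by
  constructor
  · rintro ⟨π, hπ0, hπ1, hπm, hπE⟩
    set N : (∀ i, C i) → ℝ := fun c => ∑ p ∈ K, (if c p.1 = p.2 then (1:ℝ) else 0) with hN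
    have hN0 : ∀ c, 0 ≤ N c := by
      intro c
      refine Finset.sum_nonneg fun p _ => ?_
      split <;> norm_num
    have hswap : ∑ p ∈ K, q p.1 p.2 = ∑ c, π c * N c := by
      have hstep : ∀ p ∈ K, q p.1 p.2
          = ∑ c, π c * (if c p.1 = p.2 then (1:ℝ) else 0) :=
        fun p _ => (hπm p.1 p.2).symm
      rw [Finset.sum_congr rfl hstep, Finset.sum_comm]
      refine Finset.sum_congr rfl fun c _ => ?_
      rw [hN, Finset.mul_sum]
    have h1 : ∑ c ∈ Finset.univ.filter (fun c : ∀ i, C i => ∃ p ∈ K, c p.1 = p.2), π c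
        ≤ ∑ c ∈ Finset.univ.filter (fun c : ∀ i, C i => ∃ p ∈ K, c p.1 = p.2), π c * N c := by
      refine Finset.sum_le_sum fun c hc => ?_
      obtain ⟨p0, hp0, hcp⟩ := (Finset.mem_filter.1 hc).2
      have hN1 : 1 ≤ N c := by
        have hs := Finset.single_le_sum
          (f := fun p : Σ i, C i => if c p.1 = p.2 then (1:ℝ) else 0)
          (fun p _ => by split <;> norm_num) hp0
        rw [if_pos hcp] at hs
        exact hs
      exact le_mul_of_one_le_right (hπ0 c) hN1
    have h2 : ∑ c ∈ Finset.univ.filter (fun c : ∀ i, C i => ∃ p ∈ K, c p.1 = p.2), π c * N c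
        ≤ ∑ c, π c * N c :=
      Finset.sum_le_sum_of_subset_of_nonneg (Finset.filter_subset _ _)
        (fun c _ _ => mul_nonneg (hπ0 c) (hN0 c))
    rw [hswap]
    rw [hπE] at h1
    linarith
  · intro h
    obtain ⟨π, hπ0, hπ1, hπm, hπE⟩ := exists_clause_pi C K q hq0 hq1 h
    refine ⟨π, hπ0, hπ1, hπm, ?_⟩
    rw [Finset.sum_filter_of_ne]
    · exact hπ1
    · intro c _ hc
      by_contra hcon
      push_neg at hcon
      exact hc (hπE c fun p hp => hcon p hp)
end
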